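/- The semi-discrete IEQ Camassa-Holm system, written as the ODE z' = f(z) on ℝ^{2N} with z = (U, Q), where f(U,Q) = (D(Q - U·U + D₁((D₁U)·U)), -U·D(Q - U·U + D₁((D₁U)·U)) - (D₁U)·(D₁ D(Q - U·U + D₁((D₁U)·U)))), has the quadratic invariant E(U,Q) = ⟨U, Q⟩: the gradient of E along f vanishes, i.e., ⟨Q, f₁(U,Q)⟩ + ⟨U, f₂(U,Q)⟩ = 0 for all (U,Q) ∈ ℝ^N × ℝ^N. -/
import Mathlib


open scoped Matrix

lemma skew_dot {N : ℕ} (A : Matrix (Fin N) (Fin N) ℝ) (hA : A.transpose = -A)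
    (x y : Fin N → ℝ) : x ⬝ᵥ A.mulVec y = -(A.mulVec x ⬝ᵥ y) := by
  rw [Matrix.dotProduct_mulVec, ← Matrix.mulVec_transpose, hA, Matrix.neg_mulVec,
    neg_dotProduct]

/-- the semi-discrete IEQ Camassa–Holm vector field has
`E(U,Q) = ⟨U, Q⟩` as quadratic invariant: `⟨Q, f₁(U,Q)⟩ + ⟨U, f₂(U,Q)⟩ = 0`. -/
theorem stmt15 {N : ℕ} (D D₁ : Matrix (Fin N) (Fin N) ℝ)
    (hD : D.transpose = -D) (hD₁ : D₁.transpose = -D₁) :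
    ∀ U Q : Fin N → ℝ,
      (Q ⬝ᵥ D.mulVec (fun j => Q j - U j * U j
          + D₁.mulVec (fun k => D₁.mulVec U k * U k) j))
      + (U ⬝ᵥ fun j =>
          -(U j) * D.mulVec (fun l => Q l - U l * U l
              + D₁.mulVec (fun k => D₁.mulVec U k * U k) l) j
          - D₁.mulVec U j * D₁.mulVec (D.mulVec (fun l => Q l - U l * U l
              + D₁.mulVec (fun k => D₁.mulVec U k * U k) l)) j)
      = 0 := by
  intro U Q
  set v : Fin N → ℝ := fun k => D₁.mulVec U k * U k with hv
  set w : Fin N → ℝ := fun j => Q j - U j * U j + D₁.mulVec v j with hw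
  set g : Fin N → ℝ := D.mulVec w with hg
  have h2 : v ⬝ᵥ D₁.mulVec g = -(D₁.mulVec v ⬝ᵥ g) := skew_dot D₁ hD₁ v g
  have h3 : w ⬝ᵥ g = 0 := by
    have h := skew_dot D hD w w
    rw [← hg] at h
    have h' : g ⬝ᵥ w = w ⬝ᵥ g := dotProduct_comm _ _
    linarith [h, h'.symm ▸ h]
  have key : Q ⬝ᵥ g + (U ⬝ᵥ fun j => -(U j) * g j - D₁.mulVec U j * D₁.mulVec g j) = 0 := by
    have expand : Q ⬝ᵥ g - (fun j => U j * U j) ⬝ᵥ g + D₁.mulVec v ⬝ᵥ g = w ⬝ᵥ g := by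
      simp only [dotProduct, hw, ← Finset.sum_sub_distrib, ← Finset.sum_add_distrib]
      exact Finset.sum_congr rfl fun j _ => by ring
    have h1 : (U ⬝ᵥ fun j => -(U j) * g j - D₁.mulVec U j * D₁.mulVec g j)
        = -((fun j => U j * U j) ⬝ᵥ g) - v ⬝ᵥ D₁.mulVec g := by
      simp only [dotProduct, hv, ← Finset.sum_neg_distrib, ← Finset.sum_sub_distrib]
      exact Finset.sum_congr rfl fun j _ => by ring
    rw [h1, h2]
    linarith [expand, h3]
  exact key
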